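/- Let Z, W, V be random variables on finite alphabets, let P be a pmf on their product alphabet under which Z → W → V forms a Markov chain (Z and V are conditionally independent given W), and let P̃ be any pmf on the same product alphabet whose support is contained in the support of P. Then the conditional mutual information computed under P̃ satisfies I_{P̃}(Z;V|W) ≤ D(P̃ ‖ P). -/

import Mathlib

/-!
On the support of `P̃` the Markov property gives `log P = log P_ZW + log P_VW - log P_W`, so
`D(P̃ ‖ P) - I_P̃(Z;V|W) = D(P̃_ZW ‖ P_ZW) + (D(P̃_VW ‖ P_VW) - D(P̃_W ‖ P_W))`.
The first term is nonnegative by Gibbs' inequality, and the second because passing to a marginal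
cannot increase the KL divergence; both are instances of the log-sum inequality.
-/

open Filter

noncomputable section

/-- `p` is a probability mass function on the finite alphabet `α`. -/
def IsPMF {α : Type*} [Fintype α] (p : α → ℝ) : Prop :=
  (∀ a, 0 ≤ p a) ∧ ∑ a, p a = 1

open Classical in
/-- Probability that the random variable `X` takes the value `a`, under the pmf `p`. -/
def probEq {Ω α : Type*} [Fintype Ω] (p : Ω → ℝ) (X : Ω → α) (a : α) : ℝ :=
  ∑ ω, if X ω = a then p ω else 0

/-- Shannon entropy (base 2) of the random variable `X` under the pmf `p`. -/
def entOf {Ω α : Type*} [Fintype Ω] (p : Ω → ℝ) (X : Ω → α) : ℝ :=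
  -∑ ω, p ω * Real.logb 2 (probEq p X (X ω))

/-- Conditional Shannon entropy `H(X | Y)` under the pmf `p`. -/
def condEntOf {Ω α β : Type*} [Fintype Ω] (p : Ω → ℝ) (X : Ω → α) (Y : Ω → β) : ℝ :=
  entOf p (fun ω => (X ω, Y ω)) - entOf p Y

/-- Conditional mutual information `I(X ; Y | Z)` under the pmf `p`. -/
def condMIOf {Ω α β γ : Type*} [Fintype Ω] (p : Ω → ℝ) (X : Ω → α) (Y : Ω → β)
    (Z : Ω → γ) : ℝ :=
  condEntOf p X Z + condEntOf p Y Z - condEntOf p (fun ω => (X ω, Y ω)) Z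

/-- KL divergence (base 2) between two pmfs on a finite alphabet. -/
def klDiv2 {α : Type*} [Fintype α] (p q : α → ℝ) : ℝ :=
  ∑ a, p a * Real.logb 2 (p a / q a)

section Marginal

variable {Ω β γ : Type*} [Fintype Ω]

theorem sum_mul_comp_eq_sum_probEq [Fintype β] (p : Ω → ℝ) (X : Ω → β) (f : β → ℝ) :
    ∑ ω, p ω * f (X ω) = ∑ b, probEq p X b * f b := by
  classical
  simp only [probEq, Finset.sum_mul, ite_mul, zero_mul]
  rw [Finset.sum_comm]
  simp

theorem sum_probEq [Fintype β] (p : Ω → ℝ) (X : Ω → β) : ∑ b, probEq p X b = ∑ ω, p ω := by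
  simpa using (sum_mul_comp_eq_sum_probEq p X fun _ => 1).symm

theorem probEq_nonneg {p : Ω → ℝ} (hp : ∀ ω, 0 ≤ p ω) (X : Ω → β) (b : β) :
    0 ≤ probEq p X b :=
  Finset.sum_nonneg fun ω _ => by split_ifs <;> simp [hp ω]

theorem probEq_apply_pos {p : Ω → ℝ} (hp : ∀ ω, 0 ≤ p ω) (X : Ω → β) {ω : Ω} (hω : 0 < p ω) :
    0 < probEq p X (X ω) := by
  classical
  refine hω.trans_le ?_
  simpa [probEq] using Finset.single_le_sum (f := fun ω' => if X ω' = X ω then p ω' else 0)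
    (fun ω' _ => by split_ifs <;> simp [hp ω']) (Finset.mem_univ ω)

theorem probEq_apply_of_injective (p : Ω → ℝ) {X : Ω → β} (hX : X.Injective) (ω : Ω) :
    probEq p X (X ω) = p ω := by
  classical
  simp [probEq, hX.eq_iff]

theorem probEq_eq_zero_of_probEq_eq_zero {p q : Ω → ℝ} (hq : ∀ ω, 0 ≤ q ω)
    (hpq : ∀ ω, q ω = 0 → p ω = 0) (X : Ω → β) {b : β} (h : probEq q X b = 0) :
    probEq p X b = 0 := by
  rw [probEq, Finset.sum_eq_zero_iff_of_nonneg fun ω _ => by split_ifs <;> simp [hq ω]] at h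
  exact Finset.sum_eq_zero fun ω _ => by
    have := h ω (Finset.mem_univ ω); split_ifs at this ⊢ <;> simp [hpq ω, *]

open Classical in
theorem probEq_probEq [Fintype β] (p : Ω → ℝ) (X : Ω → β) (g : β → γ) :
    probEq (probEq p X) g = probEq p fun ω => g (X ω) := by
  funext c
  simpa [probEq, mul_ite] using
    (sum_mul_comp_eq_sum_probEq p X fun b => if g b = c then (1 : ℝ) else 0).symm

theorem IsPMF.probEq [Fintype β] {p : Ω → ℝ} (hp : IsPMF p) (X : Ω → β) :
    IsPMF (probEq p X) :=
  ⟨probEq_nonneg hp.1 X, by rw [sum_probEq, hp.2]⟩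

end Marginal

namespace Real

theorem sub_le_mul_log_div {a r : ℝ} (ha : 0 ≤ a) (hr : 0 ≤ r) (hra : r = 0 → a = 0) :
    a - r ≤ a * log (a / r) := by
  rcases hr.eq_or_lt with rfl | hr
  · simp [hra rfl]
  have key : r * InformationTheory.klFun (a / r) = a * log (a / r) + r - a := by
    rw [InformationTheory.klFun_apply]
    field_simp
  linarith [mul_nonneg hr.le (InformationTheory.klFun_nonneg (div_nonneg ha hr.le))]

theorem log_sum_inequality {ι : Type*} (s : Finset ι) {a b : ι → ℝ} (ha : ∀ i ∈ s, 0 ≤ a i)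
    (hb : ∀ i ∈ s, 0 ≤ b i) (hab : ∀ i ∈ s, b i = 0 → a i = 0) :
    (∑ i ∈ s, a i) * log ((∑ i ∈ s, a i) / ∑ i ∈ s, b i) ≤ ∑ i ∈ s, a i * log (a i / b i) := by
  set A := ∑ i ∈ s, a i
  set B := ∑ i ∈ s, b i
  rcases (Finset.sum_nonneg ha).eq_or_lt with hA | hA
  · have ha0 := (Finset.sum_eq_zero_iff_of_nonneg ha).mp hA.symm
    rw [show A = 0 from hA.symm, zero_mul]
    exact (Finset.sum_eq_zero fun i hi => by simp [ha0 i hi]).ge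
  have hB : 0 < B := by
    refine (Finset.sum_nonneg hb).lt_of_ne fun hB => hA.ne' ?_
    exact Finset.sum_eq_zero fun i hi =>
      hab i hi ((Finset.sum_eq_zero_iff_of_nonneg hb).mp hB.symm i hi)
  have hc : 0 < A / B := div_pos hA hB
  -- each term is compared with the rescaled reference weight `(A / B) * b i`
  have term : ∀ i ∈ s, a i - A / B * b i ≤ a i * log (a i / b i) - a i * log (A / B) := by
    intro i hi
    have h := sub_le_mul_log_div (ha i hi) (mul_nonneg hc.le (hb i hi))
      fun h => hab i hi ((mul_eq_zero.mp h).resolve_left hc.ne')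
    rcases eq_or_ne (a i) 0 with h0 | h0
    · simpa [h0] using h
    have hbi : b i ≠ 0 := fun h => h0 (hab i hi h)
    rwa [div_mul_eq_div_div_swap, log_div (div_ne_zero h0 hbi) hc.ne', mul_sub] at h
  have hsum := Finset.sum_le_sum term
  rw [Finset.sum_sub_distrib, Finset.sum_sub_distrib, ← Finset.mul_sum, ← Finset.sum_mul,
    div_mul_cancel₀ A hB.ne', sub_self] at hsum
  linarith

end Real

section KLDiv

variable {Ω β : Type*} [Fintype Ω]

theorem klDiv2_eq_sum_mul_log_div (p q : Ω → ℝ) :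
    klDiv2 p q = (∑ ω, p ω * Real.log (p ω / q ω)) / Real.log 2 := by
  simp only [klDiv2, Real.logb, mul_div_assoc', Finset.sum_div]

theorem klDiv2_nonneg {p q : Ω → ℝ} (hp : IsPMF p) (hq : IsPMF q)
    (hpq : ∀ ω, q ω = 0 → p ω = 0) : 0 ≤ klDiv2 p q := by
  have h := Real.log_sum_inequality Finset.univ (fun ω _ => hp.1 ω) (fun ω _ => hq.1 ω)
    fun ω _ => hpq ω
  rw [hp.2, hq.2, div_one, Real.log_one, mul_zero] at h
  rw [klDiv2_eq_sum_mul_log_div]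
  exact div_nonneg h (Real.log_nonneg one_le_two)

theorem klDiv2_probEq_le [Fintype β] {p q : Ω → ℝ} (hp : ∀ ω, 0 ≤ p ω) (hq : ∀ ω, 0 ≤ q ω)
    (hpq : ∀ ω, q ω = 0 → p ω = 0) (X : Ω → β) :
    klDiv2 (probEq p X) (probEq q X) ≤ klDiv2 p q := by
  classical
  have fiber : ∀ (r : Ω → ℝ) b, probEq r X b = ∑ ω with X ω = b, r ω := fun r b => by
    rw [probEq, Finset.sum_filter]
  rw [klDiv2_eq_sum_mul_log_div, klDiv2_eq_sum_mul_log_div,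
    ← Finset.sum_fiberwise Finset.univ X]
  refine div_le_div_of_nonneg_right (Finset.sum_le_sum fun b _ => ?_) (Real.log_nonneg one_le_two)
  rw [fiber, fiber]
  exact Real.log_sum_inequality _ (fun ω _ => hp ω) (fun ω _ => hq ω) fun ω _ => hpq ω

end KLDiv

section Entropy

variable {Ω α β γ : Type*} [Fintype Ω]

theorem condMIOf_eq_sum (p : Ω → ℝ) (X : Ω → α) (Y : Ω → β) (Z : Ω → γ) :
    condMIOf p X Y Z = ∑ ω, p ω *
      (Real.logb 2 (probEq p (fun ω => ((X ω, Y ω), Z ω)) ((X ω, Y ω), Z ω))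
        + Real.logb 2 (probEq p Z (Z ω))
        - Real.logb 2 (probEq p (fun ω => (X ω, Z ω)) (X ω, Z ω))
        - Real.logb 2 (probEq p (fun ω => (Y ω, Z ω)) (Y ω, Z ω))) := by
  simp only [condMIOf, condEntOf, entOf, mul_add, mul_sub, Finset.sum_add_distrib,
    Finset.sum_sub_distrib]
  ring

theorem klDiv2_probEq_eq_sum [Fintype β] (p q : Ω → ℝ) (X : Ω → β) :
    klDiv2 (probEq p X) (probEq q X) =
      ∑ ω, p ω * Real.logb 2 (probEq p X (X ω) / probEq q X (X ω)) :=
  (sum_mul_comp_eq_sum_probEq p X _).symm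

end Entropy

section Markov

variable {Z W V : Type*} [Fintype Z] [Fintype W] [Fintype V]

theorem probEq_fst_fst_snd (p : Z × W × V → ℝ) (z : Z) (w : W) :
    probEq p (fun x => (x.1, x.2.1)) (z, w) = ∑ v, p (z, w, v) := by
  simp only [probEq, Fintype.sum_prod_type, Prod.mk.injEq]
  rw [Finset.sum_eq_single z (fun b _ hb => by simp [hb]) (by simp),
    Finset.sum_eq_single w (fun b _ hb => by simp [hb]) (by simp)]
  simp

theorem probEq_snd_snd_fst (p : Z × W × V → ℝ) (v : V) (w : W) :
    probEq p (fun x => (x.2.2, x.2.1)) (v, w) = ∑ z, p (z, w, v) := by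
  classical
  simp [probEq, Fintype.sum_prod_type, ite_and]

theorem probEq_snd_fst (p : Z × W × V → ℝ) (w : W) :
    probEq p (fun x => x.2.1) w = ∑ z, ∑ v, p (z, w, v) := by
  simp only [probEq, Fintype.sum_prod_type]
  refine Finset.sum_congr rfl fun z _ => ?_
  rw [Finset.sum_eq_single w (fun b _ hb => by simp [hb]) (by simp)]
  simp

theorem klDiv2_sub_condMIOf_of_markov {P Pt : Z × W × V → ℝ} (hP : ∀ x, 0 ≤ P x)
    (hPt : ∀ x, 0 ≤ Pt x)
    (hMarkov : ∀ z w v, P (z, w, v) * (∑ z', ∑ v', P (z', w, v'))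
        = (∑ v', P (z, w, v')) * (∑ z', P (z', w, v)))
    (hsupp : ∀ x, P x = 0 → Pt x = 0) :
    klDiv2 Pt P - condMIOf Pt (fun x => x.1) (fun x => x.2.2) (fun x => x.2.1) =
      klDiv2 (probEq Pt fun x => (x.1, x.2.1)) (probEq P fun x => (x.1, x.2.1))
        + klDiv2 (probEq Pt fun x => (x.2.2, x.2.1)) (probEq P fun x => (x.2.2, x.2.1))
        - klDiv2 (probEq Pt fun x => x.2.1) (probEq P fun x => x.2.1) := by
  have hinj : Function.Injective fun x : Z × W × V => ((x.1, x.2.2), x.2.1) := by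
    rintro ⟨z, w, v⟩ ⟨z', w', v'⟩ h
    simp_all
  rw [condMIOf_eq_sum, klDiv2, klDiv2_probEq_eq_sum, klDiv2_probEq_eq_sum, klDiv2_probEq_eq_sum,
    ← Finset.sum_sub_distrib, ← Finset.sum_add_distrib, ← Finset.sum_sub_distrib]
  refine Finset.sum_congr rfl fun ω _ => ?_
  rw [probEq_apply_of_injective Pt hinj]
  rcases (hPt ω).eq_or_lt with hzero | hpos
  · simp [← hzero]
  have hPpos : 0 < P ω := (hP ω).lt_of_ne fun h => hpos.ne' (hsupp ω h.symm)
  have hPtZW := (probEq_apply_pos hPt (fun x => (x.1, x.2.1)) hpos).ne'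
  have hPtVW := (probEq_apply_pos hPt (fun x => (x.2.2, x.2.1)) hpos).ne'
  have hPtW := (probEq_apply_pos hPt (fun x => x.2.1) hpos).ne'
  have hPZW := (probEq_apply_pos hP (fun x => (x.1, x.2.1)) hPpos).ne'
  have hPVW := (probEq_apply_pos hP (fun x => (x.2.2, x.2.1)) hPpos).ne'
  have hPW := (probEq_apply_pos hP (fun x => x.2.1) hPpos).ne'
  have hM := hMarkov ω.1 ω.2.1 ω.2.2
  rw [← probEq_snd_fst, ← probEq_fst_fst_snd, ← probEq_snd_snd_fst] at hM
  have hlogM := congrArg (Real.logb 2) hM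
  rw [Real.logb_mul hPpos.ne' hPW, Real.logb_mul hPZW hPVW] at hlogM
  rw [Real.logb_div hpos.ne' hPpos.ne', Real.logb_div hPtZW hPZW, Real.logb_div hPtVW hPVW,
    Real.logb_div hPtW hPW]
  linear_combination -Pt ω * hlogM

end Markov

/-- If `Z → W → V` is a Markov chain under `P` (i.e. `Z` and `V` are
conditionally independent given `W`), and `P̃` is any pmf on the same product alphabet
whose support is contained in the support of `P`, then
`I_{P̃}(Z;V|W) ≤ D(P̃ ‖ P)`. -/
theorem condMI_le_klDiv_of_markov
    {Z W V : Type*} [Fintype Z] [Fintype W] [Fintype V]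
    (P Pt : Z × W × V → ℝ) (hP : IsPMF P) (hPt : IsPMF Pt)
    (hMarkov : ∀ z w v, P (z, w, v) * (∑ z', ∑ v', P (z', w, v'))
        = (∑ v', P (z, w, v')) * (∑ z', P (z', w, v)))
    (hsupp : ∀ x, P x = 0 → Pt x = 0) :
    condMIOf Pt (fun x => x.1) (fun x => x.2.2) (fun x => x.2.1) ≤ klDiv2 Pt P := by
  have hsplit := klDiv2_sub_condMIOf_of_markov hP.1 hPt.1 hMarkov hsupp
  have hZW : 0 ≤ klDiv2 (probEq Pt fun x => (x.1, x.2.1)) (probEq P fun x => (x.1, x.2.1)) :=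
    klDiv2_nonneg (hPt.probEq fun x => (x.1, x.2.1)) (hP.probEq _)
      fun _ => probEq_eq_zero_of_probEq_eq_zero hP.1 hsupp _
  have hW : klDiv2 (probEq Pt fun x => x.2.1) (probEq P fun x => x.2.1)
      ≤ klDiv2 (probEq Pt fun x => (x.2.2, x.2.1)) (probEq P fun x => (x.2.2, x.2.1)) := by
    have h := klDiv2_probEq_le (probEq_nonneg hPt.1 fun x => (x.2.2, x.2.1)) (probEq_nonneg hP.1 _)
      (fun _ => probEq_eq_zero_of_probEq_eq_zero hP.1 hsupp _) Prod.snd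
    rwa [probEq_probEq, probEq_probEq] at h
  linarith
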